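/- arXiv:1805.08802 — 3 statements merged into one kernel-verified Lean document; each statement's English description precedes it below -/
import Mathlib

section
/- Let N be a qubit channel with Pauli transfer matrix M and infidelity r = (4 − Tr M)/6. Then for every non-identity Pauli P ∈ {X, Y, Z}, the non-unital entry satisfies |M_{P,I}| ≤ 3r. -/
open Matrix Kronecker
open scoped ComplexOrder

noncomputable def pauli : Fin 4 → Matrix (Fin 2) (Fin 2) ℂ
  | 0 => 1
  | 1 => !![0, 1; 1, 0]
  | 2 => !![0, -Complex.I; Complex.I, 0]
  | 3 => !![1, 0; 0, -1]

/-- The Choi matrix of a linear map on 2×2 complex matrices. -/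
noncomputable def choi (N : Matrix (Fin 2) (Fin 2) ℂ →ₗ[ℂ] Matrix (Fin 2) (Fin 2) ℂ) :
    Matrix (Fin 2 × Fin 2) (Fin 2 × Fin 2) ℂ :=
  ∑ i : Fin 2, ∑ j : Fin 2,
    (Matrix.single i j (1 : ℂ)) ⊗ₖ N (Matrix.single i j (1 : ℂ))

/-- A qubit channel: completely positive (PSD Choi matrix) and trace preserving. -/
def IsQubitChannel (N : Matrix (Fin 2) (Fin 2) ℂ →ₗ[ℂ] Matrix (Fin 2) (Fin 2) ℂ) : Prop :=
  (choi N).PosSemidef ∧ ∀ A, (N A).trace = A.trace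

/-- The Pauli transfer matrix: M_{P,Q} = Tr(P N(Q))/2. -/
noncomputable def ptm (N : Matrix (Fin 2) (Fin 2) ℂ →ₗ[ℂ] Matrix (Fin 2) (Fin 2) ℂ) :
    Matrix (Fin 4) (Fin 4) ℝ :=
  Matrix.of fun p q => ((pauli p * N (pauli q)).trace / 2).re

/-- The average gate infidelity, r(N) = (4 - Tr M)/6. -/
noncomputable def infid (N : Matrix (Fin 2) (Fin 2) ℂ →ₗ[ℂ] Matrix (Fin 2) (Fin 2) ℂ) : ℝ :=
  (4 - (ptm N).trace) / 6

/-- For a qubit channel with infidelity r, the non-unital entries of the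
Pauli transfer matrix satisfy |M_{P,I}| ≤ 3r for every non-identity Pauli P. -/
theorem nonunital_entry_bound (N : Matrix (Fin 2) (Fin 2) ℂ →ₗ[ℂ] Matrix (Fin 2) (Fin 2) ℂ)
    (hN : IsQubitChannel N) (p : Fin 4) (hp : p ≠ 0) :
    |ptm N p 0| ≤ 3 * infid N := by
  obtain ⟨hpsd, htp⟩ := hN
  have hch : ∀ a b c d, choi N (a,b) (c,d) = N (single a c 1) b d := by
    intro a b c d
    fin_cases a <;> fin_cases c <;>
    simp [choi, Matrix.sum_apply, Matrix.kroneckerMap_apply, Fin.sum_univ_two,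
      Matrix.single_apply_same, Matrix.single_apply_of_ne]
  have h0 : pauli 0 = single 0 0 1 + single 1 1 1 := by
    ext i j; fin_cases i <;> fin_cases j <;>
      simp [pauli, Matrix.one_apply, Matrix.single_apply_same,
        Matrix.single_apply_of_ne]
  have h1 : pauli 1 = single 0 1 1 + single 1 0 1 := by
    ext i j; fin_cases i <;> fin_cases j <;>
      simp [pauli, Matrix.single_apply_same, Matrix.single_apply_of_ne]
  have h2 : pauli 2 = Complex.I • single 1 0 1 - Complex.I • single 0 1 1 := by
    ext i j; fin_cases i <;> fin_cases j <;>
      simp [pauli, Matrix.single_apply_same, Matrix.single_apply_of_ne]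
  have hN2 : N (pauli 2) = Complex.I • N (single 1 0 1)
      - Complex.I • N (single 0 1 1) := by
    rw [h2, map_sub, LinearMap.map_smul, LinearMap.map_smul]
  have h3 : pauli 3 = single 0 0 1 - single 1 1 1 := by
    ext i j; fin_cases i <;> fin_cases j <;>
      simp [pauli, Matrix.single_apply_same, Matrix.single_apply_of_ne]
  -- trace preservation
  have tp : ∀ i j : Fin 2, N (single i j 1) 0 0 + N (single i j 1) 1 1
      = if i = j then 1 else 0 := by
    intro i j
    have := htp (single i j 1)
    rw [Matrix.trace, Matrix.trace] at this
    fin_cases i <;> fin_cases j <;>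
      simpa [Fin.sum_univ_two, Matrix.diag, Matrix.single_apply_same,
        Matrix.single_apply_of_ne] using this
  have tp00 := tp 0 0; have tp01 := tp 0 1; have tp10 := tp 1 0; have tp11 := tp 1 1
  simp only [if_true, if_pos rfl] at tp00 tp11
  rw [if_neg (by decide)] at tp01
  rw [if_neg (by decide)] at tp10
  have tp00r := congrArg Complex.re tp00; have tp00i := congrArg Complex.im tp00
  have tp01r := congrArg Complex.re tp01; have tp01i := congrArg Complex.im tp01
  have tp10r := congrArg Complex.re tp10; have tp10i := congrArg Complex.im tp10
  have tp11r := congrArg Complex.re tp11; have tp11i := congrArg Complex.im tp11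
  simp only [Complex.add_re, Complex.add_im, Complex.one_re, Complex.one_im,
    Complex.zero_re, Complex.zero_im] at tp00r tp00i tp01r tp01i tp10r tp10i tp11r tp11i
  -- ptm entries
  have e00 : ptm N 0 0 = ((N (single 0 0 1) 0 0).re + (N (single 1 1 1) 0 0).re
      + (N (single 0 0 1) 1 1).re + (N (single 1 1 1) 1 1).re) / 2 := by
    simp only [ptm, Matrix.of_apply, h0, map_add, Matrix.trace, Matrix.diag,
      Matrix.mul_apply, Matrix.add_apply, Fin.sum_univ_two]
    norm_num [pauli, Matrix.one_apply, Complex.div_re]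
    ring
  have e11 : ptm N 1 1 = ((N (single 0 1 1) 0 1).re + (N (single 1 0 1) 0 1).re
      + (N (single 0 1 1) 1 0).re + (N (single 1 0 1) 1 0).re) / 2 := by
    simp only [ptm, Matrix.of_apply, h1, map_add, Matrix.trace, Matrix.diag,
      Matrix.mul_apply, Matrix.add_apply, Fin.sum_univ_two]
    norm_num [pauli, Complex.div_re]
    ring
  have e22 : ptm N 2 2 = ((N (single 0 1 1) 0 1).re - (N (single 1 0 1) 0 1).re
      + (N (single 1 0 1) 1 0).re - (N (single 0 1 1) 1 0).re) / 2 := by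
    simp only [ptm, Matrix.of_apply, hN2, Matrix.trace, Matrix.diag,
      Matrix.mul_apply, Matrix.sub_apply, Matrix.smul_apply, smul_eq_mul,
      Fin.sum_univ_two]
    norm_num [pauli, Complex.div_re, Complex.normSq, Complex.mul_re, Complex.mul_im,
      Complex.I_re, Complex.I_im, Complex.sub_re, Complex.sub_im, Complex.add_re,
      Complex.add_im, Complex.neg_re, Complex.neg_im]
    ring
  have e33 : ptm N 3 3 = ((N (single 0 0 1) 0 0).re - (N (single 1 1 1) 0 0).re
      - (N (single 0 0 1) 1 1).re + (N (single 1 1 1) 1 1).re) / 2 := by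
    simp only [ptm, Matrix.of_apply, h3, map_sub, Matrix.trace, Matrix.diag,
      Matrix.mul_apply, Matrix.sub_apply, Fin.sum_univ_two]
    norm_num [pauli, Complex.div_re]
    ring
  have e10 : ptm N 1 0 = ((N (single 0 0 1) 0 1).re + (N (single 1 1 1) 0 1).re
      + (N (single 0 0 1) 1 0).re + (N (single 1 1 1) 1 0).re) / 2 := by
    simp only [ptm, Matrix.of_apply, h0, h1, map_add, Matrix.trace, Matrix.diag,
      Matrix.mul_apply, Matrix.add_apply, Fin.sum_univ_two]
    norm_num [pauli, Complex.div_re]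
    ring
  have e20 : ptm N 2 0 = ((N (single 0 0 1) 1 0).im + (N (single 1 1 1) 1 0).im
      - (N (single 0 0 1) 0 1).im - (N (single 1 1 1) 0 1).im) / 2 := by
    simp only [ptm, Matrix.of_apply, h0, hN2, map_add, Matrix.trace, Matrix.diag,
      Matrix.mul_apply, Matrix.add_apply, Fin.sum_univ_two]
    norm_num [pauli, Complex.div_re, Complex.mul_re, Complex.mul_im,
      Complex.I_re, Complex.I_im, Complex.add_re, Complex.add_im,
      Complex.neg_re, Complex.neg_im]
    ring
  have e30 : ptm N 3 0 = ((N (single 0 0 1) 0 0).re + (N (single 1 1 1) 0 0).re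
      - (N (single 0 0 1) 1 1).re - (N (single 1 1 1) 1 1).re) / 2 := by
    simp only [ptm, Matrix.of_apply, h0, h3, map_add, Matrix.trace, Matrix.diag,
      Matrix.mul_apply, Matrix.add_apply, Fin.sum_univ_two]
    norm_num [pauli, Complex.div_re]
    ring
  have hinf : infid N = (4 - (ptm N 0 0 + ptm N 1 1 + ptm N 2 2 + ptm N 3 3)) / 6 := by
    rw [infid, Matrix.trace]
    congr 1
    rw [Fin.sum_univ_four]
    rfl
  -- quadratic form facts
  have qf : ∀ v : Fin 2 × Fin 2 → ℂ, 0 ≤ (star v ⬝ᵥ choi N *ᵥ v).re := by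
    intro v; exact (Complex.le_def.mp (hpsd.dotProduct_mulVec_nonneg v)).1
  -- quadratic forms
  have qA := hpsd.dotProduct_mulVec_nonneg (fun x => if x.1 = x.2 then (0:ℂ) else 1)
  have qB := hpsd.dotProduct_mulVec_nonneg (fun x => if x.2 = 0 then (1:ℂ) else -1)
  have qC := hpsd.dotProduct_mulVec_nonneg (fun x => if x.1 = 0 then (1:ℂ) else -1)
  have qD := hpsd.dotProduct_mulVec_nonneg (fun x => if x.1 = x.2 then (0:ℂ) else if x.1 = 0 then 1 else -1)
  have qE := hpsd.dotProduct_mulVec_nonneg (fun x => if x.1 = x.2 then (if x.1 = 0 then Complex.I else -Complex.I) else 1)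
  have qF := hpsd.dotProduct_mulVec_nonneg (fun x => if x.1 = x.2 then (if x.1 = 0 then -Complex.I else Complex.I) else 1)
  have qG := hpsd.dotProduct_mulVec_nonneg (fun x => if x.1 = x.2 then (if x.1 = 0 then (1:ℂ) else -1) else 0)
  have qH := hpsd.dotProduct_mulVec_nonneg (fun x => if x.1 = 0 then (if x.2 = 0 then (0:ℂ) else 1) else 0)
  have qK := hpsd.dotProduct_mulVec_nonneg (fun x => if x.1 = 0 then (0:ℂ) else if x.2 = 0 then 1 else 0)
  simp only [dotProduct, Matrix.mulVec, Fintype.sum_prod_type, Fin.sum_univ_two, Pi.star_apply] at qA qB qC qD qE qF qG qH qK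
  norm_num [Complex.conj_I, -Prod.mk_zero_zero, -Prod.mk_one_one] at qA qB qC qD qE qF qG qH qK
  simp only [hch] at qA qB qC qD qE qF qG qH qK
  replace qA := (Complex.le_def.mp qA).1
  replace qB := (Complex.le_def.mp qB).1
  replace qC := (Complex.le_def.mp qC).1
  replace qD := (Complex.le_def.mp qD).1
  replace qE := (Complex.le_def.mp qE).1
  replace qF := (Complex.le_def.mp qF).1
  replace qG := (Complex.le_def.mp qG).1
  replace qH := (Complex.le_def.mp qH).1
  replace qK := (Complex.le_def.mp qK).1
  simp only [Complex.zero_re, Complex.add_re, Complex.neg_re, Complex.sub_re,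
    Complex.mul_re, Complex.mul_im, Complex.I_re, Complex.I_im, Complex.add_im,
    Complex.neg_im, Complex.sub_im] at qA qB qC qD qE qF qG qH qK
  rw [abs_le]
  obtain rfl | rfl | rfl : p = 1 ∨ p = 2 ∨ p = 3 := by omega
  · exact ⟨by rw [e10, hinf, e00, e11, e22, e33]; linarith,
           by rw [e10, hinf, e00, e11, e22, e33]; linarith⟩
  · exact ⟨by rw [e20, hinf, e00, e11, e22, e33]; linarith,
           by rw [e20, hinf, e00, e11, e22, e33]; linarith⟩
  · exact ⟨by rw [e30, hinf, e00, e11, e22, e33]; linarith,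
           by rw [e30, hinf, e00, e11, e22, e33]; linarith⟩
end

section
/- Let N be a qubit channel with Pauli transfer matrix M and infidelity r = (4 − Tr M)/6. Then for every Pauli P ∈ {X, Y, Z}, the diagonal error entry satisfies |1 − M_{P,P}| ≤ 3r. -/
open Matrix Kronecker
open scoped ComplexOrder

noncomputable def qf' (N : Matrix (Fin 2) (Fin 2) ℂ →ₗ[ℂ] Matrix (Fin 2) (Fin 2) ℂ)
    (q : Fin 4) : ℂ :=
  star (fun x : Fin 2 × Fin 2 => pauli q x.1 x.2) ⬝ᵥ
    choi N *ᵥ (fun x : Fin 2 × Fin 2 => pauli q x.1 x.2)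

lemma pauli1_decomp' : pauli 1 = Matrix.single 0 1 1 + Matrix.single 1 0 1 := by
  ext i j; fin_cases i <;> fin_cases j <;> simp [pauli, Matrix.single]

lemma pauli2_decomp' : pauli 2 = (-Complex.I) • Matrix.single 0 1 1
    + Complex.I • Matrix.single 1 0 1 := by
  ext i j; fin_cases i <;> fin_cases j <;> simp [pauli, Matrix.single]

lemma pauli3_decomp' : pauli 3 = Matrix.single 0 0 1 - Matrix.single 1 1 1 := by
  ext i j; fin_cases i <;> fin_cases j <;> simp [pauli, Matrix.single]

lemma qf23' (N : Matrix (Fin 2) (Fin 2) ℂ →ₗ[ℂ] Matrix (Fin 2) (Fin 2) ℂ) :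
    qf' N 2 + qf' N 3 = (N (Matrix.single 0 0 1)).trace + (N (Matrix.single 1 1 1)).trace
      - (pauli 1 * N (pauli 1)).trace := by
  rw [pauli1_decomp', map_add]
  simp [qf', choi, pauli, dotProduct, mulVec, Fintype.sum_prod_type, Fin.sum_univ_two,
    Matrix.sum_apply, Matrix.kroneckerMap_apply, Matrix.single, Matrix.trace,
    Matrix.mul_apply, Matrix.add_apply, Matrix.diag]
  ring_nf
  simp only [Complex.I_sq]
  ring

lemma qf13' (N : Matrix (Fin 2) (Fin 2) ℂ →ₗ[ℂ] Matrix (Fin 2) (Fin 2) ℂ) :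
    qf' N 1 + qf' N 3 = (N (Matrix.single 0 0 1)).trace + (N (Matrix.single 1 1 1)).trace
      - (pauli 2 * N (pauli 2)).trace := by
  rw [pauli2_decomp', map_add, LinearMap.map_smul, LinearMap.map_smul]
  simp [qf', choi, pauli, dotProduct, mulVec, Fintype.sum_prod_type, Fin.sum_univ_two,
    Matrix.sum_apply, Matrix.kroneckerMap_apply, Matrix.single, Matrix.trace,
    Matrix.mul_apply, Matrix.add_apply, Matrix.smul_apply, Matrix.diag, smul_eq_mul]
  ring_nf
  simp only [Complex.I_sq]
  ring

lemma qf12' (N : Matrix (Fin 2) (Fin 2) ℂ →ₗ[ℂ] Matrix (Fin 2) (Fin 2) ℂ) :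
    qf' N 1 + qf' N 2 = (N (Matrix.single 0 0 1)).trace + (N (Matrix.single 1 1 1)).trace
      - (pauli 3 * N (pauli 3)).trace := by
  rw [pauli3_decomp', map_sub]
  simp [qf', choi, pauli, dotProduct, mulVec, Fintype.sum_prod_type, Fin.sum_univ_two,
    Matrix.sum_apply, Matrix.kroneckerMap_apply, Matrix.single, Matrix.trace,
    Matrix.mul_apply, Matrix.sub_apply, Matrix.diag]
  ring_nf
  simp only [Complex.I_sq]
  ring

lemma half_re' (z : ℂ) : (z / 2).re = z.re / 2 := by
  rw [show (2:ℂ) = ((2:ℝ):ℂ) by norm_num, Complex.div_ofReal_re]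

/-- For a qubit channel with infidelity r, the diagonal error entries of the
Pauli transfer matrix satisfy |1 - M_{P,P}| ≤ 3r for every non-identity Pauli P. -/
theorem diagonal_entry_bound (N : Matrix (Fin 2) (Fin 2) ℂ →ₗ[ℂ] Matrix (Fin 2) (Fin 2) ℂ)
    (hN : IsQubitChannel N) (p : Fin 4) (hp : p ≠ 0) :
    |1 - ptm N p p| ≤ 3 * infid N := by
  obtain ⟨hPSD, hTP⟩ := hN
  have hre : ∀ q : Fin 4, 0 ≤ (qf' N q).re := fun q =>
    (Complex.le_def.mp (hPSD.dotProduct_mulVec_nonneg _)).1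
  have h00 : (N (Matrix.single 0 0 1)).trace = 1 := by
    rw [hTP]; simp [Matrix.trace, Matrix.diag, Matrix.single, Fin.sum_univ_two]
  have h11 : (N (Matrix.single 1 1 1)).trace = 1 := by
    rw [hTP]; simp [Matrix.trace, Matrix.diag, Matrix.single, Fin.sum_univ_two]
  have hdiag : ∀ q : Fin 4, ptm N q q = ((pauli q * N (pauli q)).trace).re / 2 := by
    intro q; rw [← half_re']; rfl
  have h0 : ptm N 0 0 = 1 := by
    rw [hdiag]
    have : pauli 0 = (1 : Matrix (Fin 2) (Fin 2) ℂ) := rfl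
    rw [this, one_mul, hTP]
    simp [Matrix.trace_one]
  have e1 : (qf' N 2).re + (qf' N 3).re = 2 - 2 * ptm N 1 1 := by
    have := congrArg Complex.re (qf23' N)
    simp only [Complex.add_re, Complex.sub_re] at this
    rw [h00, h11] at this
    rw [hdiag]; simp at this ⊢; linarith
  have e2 : (qf' N 1).re + (qf' N 3).re = 2 - 2 * ptm N 2 2 := by
    have := congrArg Complex.re (qf13' N)
    simp only [Complex.add_re, Complex.sub_re] at this
    rw [h00, h11] at this
    rw [hdiag]; simp at this ⊢; linarith
  have e3 : (qf' N 1).re + (qf' N 2).re = 2 - 2 * ptm N 3 3 := by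
    have := congrArg Complex.re (qf12' N)
    simp only [Complex.add_re, Complex.sub_re] at this
    rw [h00, h11] at this
    rw [hdiag]; simp at this ⊢; linarith
  have htr : (ptm N).trace = ptm N 0 0 + ptm N 1 1 + ptm N 2 2 + ptm N 3 3 := by
    simp [Matrix.trace, Matrix.diag, Fin.sum_univ_four]
  have hinf : 6 * infid N = (qf' N 1).re + (qf' N 2).re + (qf' N 3).re := by
    unfold infid; rw [htr, h0]; linarith
  have r1 := hre 1; have r2 := hre 2; have r3 := hre 3
  fin_cases p
  · exact absurd rfl hp
  · show |1 - ptm N 1 1| ≤ 3 * infid N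
    rw [abs_of_nonneg (by linarith)]; linarith
  · show |1 - ptm N 2 2| ≤ 3 * infid N
    rw [abs_of_nonneg (by linarith)]; linarith
  · show |1 - ptm N 3 3| ≤ 3 * infid N
    rw [abs_of_nonneg (by linarith)]; linarith
end

section
/- Let N be a qubit channel with Pauli transfer matrix M. Then the average gate fidelity of N with the identity, obtained by integrating ⟨ψ| N(|ψ⟩⟨ψ|) |ψ⟩ over pure states ψ distributed according to the normalized uniform (rotation-invariant) measure on the unit sphere of ℂ², equals 1 − (4 − Tr M)/6; equivalently, the average gate infidelity r(N) = 1 − ∫ dψ ⟨ψ| N(|ψ⟩⟨ψ|) |ψ⟩ satisfies r(N) = Tr[𝟙₄ − M]/6. -/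
open Matrix Kronecker
open scoped ComplexOrder

section AuxAGF
open Matrix MeasureTheory

noncomputable def mon (k j l i : Fin 2) (ψ : Fin 2 → ℂ) : ℂ :=
  ψ k * ψ j * (starRingEnd ℂ) (ψ l) * (starRingEnd ℂ) (ψ i)

lemma mon_continuous (k j l i : Fin 2) : Continuous (mon k j l i) := by
  unfold mon
  exact (((continuous_apply k).mul (continuous_apply j)).mul
    (Complex.continuous_conj.comp (continuous_apply l))).mul
    (Complex.continuous_conj.comp (continuous_apply i))

lemma mon_bound {ψ : Fin 2 → ℂ} (hs : ∑ i, Complex.normSq (ψ i) = 1)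
    (k j l i : Fin 2) : ‖mon k j l i ψ‖ ≤ 1 := by
  have key : ∀ t : Fin 2, ‖ψ t‖ ≤ 1 := by
    intro t
    have h1 : Complex.normSq (ψ t) ≤ 1 := by
      rw [← hs]
      exact Finset.single_le_sum (fun _ _ => Complex.normSq_nonneg _) (Finset.mem_univ t)
    have h2 : ‖ψ t‖ ^ 2 ≤ 1 := by rwa [← Complex.sq_norm] at h1
    nlinarith [norm_nonneg (ψ t)]
  unfold mon
  simp only [norm_mul, RCLike.norm_conj]
  have := key k; have := key j; have := key l; have := key i
  have := norm_nonneg (ψ k); have := norm_nonneg (ψ j)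
  have := norm_nonneg (ψ l); have := norm_nonneg (ψ i)
  exact mul_le_one₀ (mul_le_one₀ (mul_le_one₀ ‹‖ψ k‖ ≤ 1› (norm_nonneg _) ‹‖ψ j‖ ≤ 1›)
    (norm_nonneg _) ‹‖ψ l‖ ≤ 1›) (norm_nonneg _) ‹‖ψ i‖ ≤ 1›

noncomputable def Uphase : Matrix (Fin 2) (Fin 2) ℂ := !![Complex.I, 0; 0, 1]
noncomputable def Uswap : Matrix (Fin 2) (Fin 2) ℂ := !![0, 1; 1, 0]
noncomputable def Uhad : Matrix (Fin 2) (Fin 2) ℂ :=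
  !![((Real.sqrt 2)⁻¹ : ℝ), ((Real.sqrt 2)⁻¹ : ℝ);
     ((Real.sqrt 2)⁻¹ : ℝ), -((Real.sqrt 2)⁻¹ : ℝ)]

lemma Uphase_unitary : Uphaseᴴ * Uphase = 1 := by
  ext i j
  fin_cases i <;> fin_cases j <;>
    simp [Uphase, Matrix.mul_apply, Fin.sum_univ_two, Matrix.one_apply]

lemma Uswap_unitary : Uswapᴴ * Uswap = 1 := by
  ext i j
  fin_cases i <;> fin_cases j <;>
    simp [Uswap, Matrix.mul_apply, Fin.sum_univ_two, Matrix.one_apply]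

lemma sqrt2_sq : ((Real.sqrt 2)⁻¹ : ℝ) * ((Real.sqrt 2)⁻¹ : ℝ) = 1/2 := by
  rw [← mul_inv]
  rw [Real.mul_self_sqrt (by norm_num)]
  norm_num

lemma Uhad_unitary : Uhadᴴ * Uhad = 1 := by
  ext i j
  fin_cases i <;> fin_cases j <;>
    simp [Uhad, Matrix.mul_apply, Fin.sum_univ_two, Matrix.one_apply,
      ← Complex.ofReal_mul, sqrt2_sq] <;>
    · norm_cast
      rw [sqrt2_sq]
      norm_num

section
variable (μ : Measure (Fin 2 → ℂ)) [IsProbabilityMeasure μ]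
lemma integrable_mon (hsphere : ∀ᵐ ψ ∂μ, ∑ i, Complex.normSq (ψ i) = 1) (k j l i : Fin 2) : Integrable (mon k j l i) μ := by
  apply (integrable_const (1 : ℝ)).mono'
    ((mon_continuous k j l i).aestronglyMeasurable)
  filter_upwards [hsphere] with ψ hψ
  exact mon_bound hψ k j l i

omit [IsProbabilityMeasure μ] in
lemma integral_comp_unitary
    (hinv : ∀ U : Matrix (Fin 2) (Fin 2) ℂ, Uᴴ * U = 1 →
      μ.map (fun ψ => U.mulVec ψ) = μ)
    (U : Matrix (Fin 2) (Fin 2) ℂ) (hU : Uᴴ * U = 1)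
    (f : (Fin 2 → ℂ) → ℂ) (hf : Continuous f) :
    ∫ ψ, f ψ ∂μ = ∫ ψ, f (U.mulVec ψ) ∂μ := by
  have hT : Continuous (fun ψ : Fin 2 → ℂ => U.mulVec ψ) := by
    apply continuous_pi
    intro i
    simp only [Matrix.mulVec, dotProduct]
    exact continuous_finset_sum _ fun j _ => continuous_const.mul (continuous_apply j)
  rw [← integral_map hT.aemeasurable (by rw [hinv U hU]; exact hf.aestronglyMeasurable),
    hinv U hU]
end

lemma vanish_aux {C m : ℂ} (h : m = C * m) (hC : C ≠ 1) : m = 0 := by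
  have h2 : (1 - C) * m = 0 := by linear_combination h
  rcases mul_eq_zero.mp h2 with h' | h'
  · exact absurd (by linear_combination -h') hC
  · exact h'

lemma Uphase_mulVec (ψ : Fin 2 → ℂ) (t : Fin 2) :
    Uphase.mulVec ψ t = ![Complex.I, 1] t * ψ t := by
  fin_cases t <;> simp [Uphase, Matrix.mulVec, dotProduct, Fin.sum_univ_two]

section
variable (μ : Measure (Fin 2 → ℂ)) [IsProbabilityMeasure μ]

omit [IsProbabilityMeasure μ] in
lemma mom_vanish
    (hinv : ∀ U : Matrix (Fin 2) (Fin 2) ℂ, Uᴴ * U = 1 →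
      μ.map (fun ψ => U.mulVec ψ) = μ)
    (k j l i : Fin 2)
    (hC : ![Complex.I, 1] k * ![Complex.I, 1] j *
      (starRingEnd ℂ) (![Complex.I, 1] l) * (starRingEnd ℂ) (![Complex.I, 1] i) ≠ 1) :
    ∫ ψ, mon k j l i ψ ∂μ = 0 := by
  set C := ![Complex.I, 1] k * ![Complex.I, 1] j *
      (starRingEnd ℂ) (![Complex.I, 1] l) * (starRingEnd ℂ) (![Complex.I, 1] i) with hCdef
  have h1 := integral_comp_unitary μ hinv Uphase Uphase_unitary (mon k j l i)
    (mon_continuous k j l i)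
  have h2 : ∀ ψ : Fin 2 → ℂ, mon k j l i (Uphase.mulVec ψ) = C • mon k j l i ψ := by
    intro ψ
    simp only [mon, Uphase_mulVec, _root_.map_mul, smul_eq_mul, hCdef]
    ring
  apply vanish_aux (C := C) _ hC
  calc ∫ ψ, mon k j l i ψ ∂μ = ∫ ψ, mon k j l i (Uphase.mulVec ψ) ∂μ := h1
    _ = ∫ ψ, C • mon k j l i ψ ∂μ := by simp only [h2]
    _ = C • ∫ ψ, mon k j l i ψ ∂μ := integral_smul C _
    _ = C * ∫ ψ, mon k j l i ψ ∂μ := rfl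
end

section
variable (μ : Measure (Fin 2 → ℂ)) [IsProbabilityMeasure μ]

lemma mom_eq
    (hsphere : ∀ᵐ ψ ∂μ, ∑ i, Complex.normSq (ψ i) = 1)
    (hinv : ∀ U : Matrix (Fin 2) (Fin 2) ℂ, Uᴴ * U = 1 →
      μ.map (fun ψ => U.mulVec ψ) = μ)
    (k j l i : Fin 2) :
    ∫ ψ, mon k j l i ψ ∂μ =
      ((if k = l then 1 else 0) * (if j = i then 1 else 0) +
       (if k = i then 1 else 0) * (if j = l then 1 else 0)) / 6 := by
  have hI := integrable_mon μ hsphere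
  have v := fun (k j l i : Fin 2) hC => mom_vanish μ hinv k j l i hC
  have v0001 : ∫ ψ, mon 0 0 0 1 ψ ∂μ = 0 := v 0 0 0 1 (by norm_num [Complex.ext_iff])
  have v0010 : ∫ ψ, mon 0 0 1 0 ψ ∂μ = 0 := v 0 0 1 0 (by norm_num [Complex.ext_iff])
  have v0011 : ∫ ψ, mon 0 0 1 1 ψ ∂μ = 0 := v 0 0 1 1 (by norm_num [Complex.ext_iff])
  have v0100 : ∫ ψ, mon 0 1 0 0 ψ ∂μ = 0 := v 0 1 0 0 (by norm_num [Complex.ext_iff])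
  have v0111 : ∫ ψ, mon 0 1 1 1 ψ ∂μ = 0 := v 0 1 1 1 (by norm_num [Complex.ext_iff])
  have v1000 : ∫ ψ, mon 1 0 0 0 ψ ∂μ = 0 := v 1 0 0 0 (by norm_num [Complex.ext_iff])
  have v1011 : ∫ ψ, mon 1 0 1 1 ψ ∂μ = 0 := v 1 0 1 1 (by norm_num [Complex.ext_iff])
  have v1100 : ∫ ψ, mon 1 1 0 0 ψ ∂μ = 0 := v 1 1 0 0 (by norm_num [Complex.ext_iff])
  have v1101 : ∫ ψ, mon 1 1 0 1 ψ ∂μ = 0 := v 1 1 0 1 (by norm_num [Complex.ext_iff])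
  have v1110 : ∫ ψ, mon 1 1 1 0 ψ ∂μ = 0 := v 1 1 1 0 (by norm_num [Complex.ext_iff])
  have f0110 : mon 0 1 1 0 = mon 0 1 0 1 := by funext ψ; unfold mon; ring
  have f1001 : mon 1 0 0 1 = mon 0 1 0 1 := by funext ψ; unfold mon; ring
  have f1010 : mon 1 0 1 0 = mon 0 1 0 1 := by funext ψ; unfold mon; ring
  -- swap symmetry
  have e1 : ∫ ψ, mon 0 0 0 0 ψ ∂μ = ∫ ψ, mon 1 1 1 1 ψ ∂μ := by
    rw [integral_comp_unitary μ hinv Uswap Uswap_unitary _ (mon_continuous 0 0 0 0)]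
    refine integral_congr_ae (Filter.Eventually.of_forall fun ψ => ?_)
    simp [mon, Uswap, Matrix.mulVec, dotProduct, Fin.sum_univ_two]
  -- sphere constraint
  have e2 : ∑ p : Fin 2 × Fin 2, ∫ ψ, mon p.1 p.2 p.1 p.2 ψ ∂μ = 1 := by
    rw [← integral_finset_sum _ (fun p _ => hI p.1 p.2 p.1 p.2)]
    rw [integral_congr_ae (g := fun _ => (1:ℂ)) ?_]
    · simp
    · filter_upwards [hsphere] with ψ hψ
      have h2 : Complex.normSq (ψ 0) + Complex.normSq (ψ 1) = 1 := by
        rw [← hψ, Fin.sum_univ_two]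
      calc ∑ p : Fin 2 × Fin 2, mon p.1 p.2 p.1 p.2 ψ
          = (ψ 0 * (starRingEnd ℂ) (ψ 0) + ψ 1 * (starRingEnd ℂ) (ψ 1)) ^ 2 := by
            simp only [Fintype.sum_prod_type, Fin.sum_univ_two, mon]; ring
        _ = ((Complex.normSq (ψ 0) : ℂ) + (Complex.normSq (ψ 1) : ℂ)) ^ 2 := by
            rw [Complex.mul_conj, Complex.mul_conj]
        _ = 1 := by rw [← Complex.ofReal_add, h2]; norm_num
  -- hadamard constraint
  have e3 : ∫ ψ, mon 0 0 0 0 ψ ∂μ =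
      (1/4 : ℂ) * ∑ p : Fin 2 × Fin 2 × Fin 2 × Fin 2,
        ∫ ψ, mon p.1 p.2.1 p.2.2.1 p.2.2.2 ψ ∂μ := by
    rw [integral_comp_unitary μ hinv Uhad Uhad_unitary _ (mon_continuous 0 0 0 0)]
    have hc : ((Real.sqrt 2)⁻¹ : ℂ) * ((Real.sqrt 2)⁻¹ : ℂ) = 1/2 := by
      have := Real.mul_self_sqrt (le_of_lt two_pos)
      rw [← Complex.ofReal_inv, ← Complex.ofReal_mul, ← mul_inv, this]
      norm_num
    have hpt : ∀ ψ : Fin 2 → ℂ, mon 0 0 0 0 (Uhad.mulVec ψ) =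
        (1/4 : ℂ) • ∑ p : Fin 2 × Fin 2 × Fin 2 × Fin 2, mon p.1 p.2.1 p.2.2.1 p.2.2.2 ψ := by
      intro ψ
      have h0 : Uhad.mulVec ψ 0 = ((Real.sqrt 2)⁻¹ : ℂ) * ψ 0 + ((Real.sqrt 2)⁻¹ : ℂ) * ψ 1 := by
        simp [Uhad, Matrix.mulVec, dotProduct, Fin.sum_univ_two]
      simp only [mon]
      rw [h0]
      simp only [map_add, _root_.map_mul, map_inv₀, Complex.conj_ofReal, Fintype.sum_prod_type,
        Fin.sum_univ_two, smul_eq_mul]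
      linear_combination (((Real.sqrt 2)⁻¹ : ℂ) * ((Real.sqrt 2)⁻¹ : ℂ) + 1/2) *
        ((ψ 0 + ψ 1)^2 * ((starRingEnd ℂ) (ψ 0) + (starRingEnd ℂ) (ψ 1))^2) * hc
    simp only [hpt]
    rw [integral_smul, integral_finset_sum _ (fun p _ => hI p.1 p.2.1 p.2.2.1 p.2.2.2)]
    simp [smul_eq_mul]
  rw [Fintype.sum_prod_type] at e3
  simp only [Fintype.sum_prod_type, Fin.sum_univ_two] at e3 e2
  rw [v0001, v0010, v0011, v0100, v0111, v1000, v1011, v1100, v1101, v1110,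
    f0110, f1001, f1010] at e3
  rw [f1010] at e2
  -- solve the linear system
  have hI3 : ∫ ψ, mon 0 1 0 1 ψ ∂μ = 1/6 := by
    linear_combination (1/3 : ℂ) * e1 + (1/6 : ℂ) * e2 - (2/3 : ℂ) * e3
  have hI1 : ∫ ψ, mon 0 0 0 0 ψ ∂μ = 1/3 := by
    linear_combination (1/6 : ℂ) * e1 + (1/3 : ℂ) * e2 + (2/3 : ℂ) * e3
  have hI2 : ∫ ψ, mon 1 1 1 1 ψ ∂μ = 1/3 := by rw [← e1]; exact hI1
  clear v hI e1 e2 e3 hsphere hinv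
  fin_cases k <;> fin_cases j <;> fin_cases l <;> fin_cases i <;>
    simp only [Fin.mk_zero, Fin.mk_one, Fin.isValue] <;>
    first
      | (rw [hI1]; norm_num)
      | (rw [hI2]; norm_num)
      | (rw [hI3]; norm_num)
      | (rw [f0110, hI3]; norm_num)
      | (rw [f1001, hI3]; norm_num)
      | (rw [f1010, hI3]; norm_num)
      | (rw [v0001]; norm_num)
      | (rw [v0010]; norm_num)
      | (rw [v0011]; norm_num)
      | (rw [v0100]; norm_num)
      | (rw [v0111]; norm_num)
      | (rw [v1000]; norm_num)
      | (rw [v1011]; norm_num)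
      | (rw [v1100]; norm_num)
      | (rw [v1101]; norm_num)
      | (rw [v1110]; norm_num)
end

lemma decomp (N : Matrix (Fin 2) (Fin 2) ℂ →ₗ[ℂ] Matrix (Fin 2) (Fin 2) ℂ)
    (ψ : Fin 2 → ℂ) :
    star ψ ⬝ᵥ (N (Matrix.vecMulVec ψ (star ψ))).mulVec ψ
      = ∑ q : (Fin 2 × Fin 2) × Fin 2 × Fin 2,
          (N (Matrix.single q.1.1 q.1.2 1)) q.2.1 q.2.2 *
            mon q.1.1 q.2.2 q.1.2 q.2.1 ψ := by
  have hA : Matrix.vecMulVec ψ (star ψ) =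
      (ψ 0 * (starRingEnd ℂ) (ψ 0)) • Matrix.single 0 0 1 +
      (ψ 0 * (starRingEnd ℂ) (ψ 1)) • Matrix.single 0 1 1 +
      (ψ 1 * (starRingEnd ℂ) (ψ 0)) • Matrix.single 1 0 1 +
      (ψ 1 * (starRingEnd ℂ) (ψ 1)) • Matrix.single 1 1 1 := by
    ext a b
    fin_cases a <;> fin_cases b <;>
      simp [Matrix.vecMulVec_apply, Matrix.single, Complex.star_def]
  rw [hA]
  simp only [map_add, _root_.map_smul]
  simp only [dotProduct, Matrix.mulVec, Fin.sum_univ_two, Fintype.sum_prod_type,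
    mon, Matrix.add_apply, Matrix.smul_apply, smul_eq_mul, Pi.star_apply, Complex.star_def]
  ring

lemma ptm_trace (N : Matrix (Fin 2) (Fin 2) ℂ →ₗ[ℂ] Matrix (Fin 2) (Fin 2) ℂ) :
    (ptm N).trace =
      ((N (Matrix.single 0 0 1)) 0 0 + (N (Matrix.single 0 1 1)) 0 1 +
       (N (Matrix.single 1 0 1)) 1 0 + (N (Matrix.single 1 1 1)) 1 1).re := by
  have hP0 : pauli 0 = Matrix.single 0 0 1 + Matrix.single 1 1 1 := by
    ext a b; fin_cases a <;> fin_cases b <;> simp [pauli, Matrix.single, Matrix.one_apply]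
  have hP1 : pauli 1 = Matrix.single 0 1 1 + Matrix.single 1 0 1 := by
    ext a b; fin_cases a <;> fin_cases b <;> simp [pauli, Matrix.single]
  have hP2 : pauli 2 = (-Complex.I) • Matrix.single 0 1 1 +
      Complex.I • Matrix.single 1 0 1 := by
    ext a b; fin_cases a <;> fin_cases b <;> simp [pauli, Matrix.single]
  have hP3 : pauli 3 = Matrix.single 0 0 1 + (-1 : ℂ) • Matrix.single 1 1 1 := by
    ext a b; fin_cases a <;> fin_cases b <;> simp [pauli, Matrix.single]
  have hE : ∀ (a b i j : Fin 2), Matrix.single a b (1:ℂ) i j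
      = if a = i ∧ b = j then 1 else 0 := fun a b i j => rfl
  have hT : (ptm N).trace = ∑ p : Fin 4, ((pauli p * N (pauli p)).trace / 2).re := by
    simp [Matrix.trace, ptm, Matrix.diag]
  rw [hT, Fin.sum_univ_four, hP0, hP1, hP2, hP3]
  simp only [map_add, _root_.map_smul]
  simp only [Matrix.trace, Matrix.diag, Fin.sum_univ_two, Matrix.mul_apply,
    Matrix.add_apply, Matrix.smul_apply, smul_eq_mul, hE]
  norm_num [Complex.add_re, Complex.mul_re, Complex.mul_im, Complex.add_im,
    Complex.I_re, Complex.I_im, Complex.neg_re, Complex.neg_im, Complex.div_re]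
  ring

end AuxAGF

open MeasureTheory in
/-- The average gate fidelity of a qubit channel N with the identity,
averaged over pure states ψ drawn from the (unique) normalized rotation-invariant
measure on the unit sphere of ℂ², equals 1 - (4 - Tr M)/6, i.e. the average gate
infidelity is r(N) = Tr[𝟙₄ - M]/6.  The uniform measure is formalized as a probability
measure μ on ℂ² that is concentrated on the unit sphere and invariant under every
unitary rotation. -/
theorem average_gate_fidelity_eq
    (N : Matrix (Fin 2) (Fin 2) ℂ →ₗ[ℂ] Matrix (Fin 2) (Fin 2) ℂ)
    (hN : IsQubitChannel N)
    (μ : Measure (Fin 2 → ℂ)) (hprob : IsProbabilityMeasure μ)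
    (hsphere : ∀ᵐ ψ ∂μ, ∑ i, Complex.normSq (ψ i) = 1)
    (hinv : ∀ U : Matrix (Fin 2) (Fin 2) ℂ, Uᴴ * U = 1 →
      μ.map (fun ψ => U.mulVec ψ) = μ) :
    (∫ ψ, (star ψ ⬝ᵥ (N (Matrix.vecMulVec ψ (star ψ))).mulVec ψ).re ∂μ)
        = 1 - (4 - (ptm N).trace) / 6 ∧
    1 - (∫ ψ, (star ψ ⬝ᵥ (N (Matrix.vecMulVec ψ (star ψ))).mulVec ψ).re ∂μ)
        = ((1 : Matrix (Fin 4) (Fin 4) ℝ) - ptm N).trace / 6 := by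
  classical
  haveI := hprob
  set f : (Fin 2 → ℂ) → ℂ :=
    fun ψ => star ψ ⬝ᵥ (N (Matrix.vecMulVec ψ (star ψ))).mulVec ψ with hfdef
  have hfsum : ∀ ψ, f ψ = ∑ q : (Fin 2 × Fin 2) × Fin 2 × Fin 2,
      (N (Matrix.single q.1.1 q.1.2 1)) q.2.1 q.2.2 • mon q.1.1 q.2.2 q.1.2 q.2.1 ψ := by
    intro ψ
    simp only [hfdef, smul_eq_mul]
    exact decomp N ψ
  have hfint : Integrable f μ := by
    have : f = fun ψ => ∑ q : (Fin 2 × Fin 2) × Fin 2 × Fin 2,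
        (N (Matrix.single q.1.1 q.1.2 1)) q.2.1 q.2.2 • mon q.1.1 q.2.2 q.1.2 q.2.1 ψ :=
      funext hfsum
    rw [this]
    exact integrable_finset_sum _ fun q _ => by
      exact (integrable_mon μ hsphere q.1.1 q.2.2 q.1.2 q.2.1).smul
        ((N (Matrix.single q.1.1 q.1.2 1)) q.2.1 q.2.2)
  have hsmul : ∀ (c : ℂ) (k j l i : Fin 2),
      ∫ ψ, c • mon k j l i ψ ∂μ = c * ∫ ψ, mon k j l i ψ ∂μ := by
    intro c k j l i
    simpa [smul_eq_mul] using integral_smul (μ := μ) c (mon k j l i)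
  have hF : ∫ ψ, f ψ ∂μ = ∑ q : (Fin 2 × Fin 2) × Fin 2 × Fin 2,
      (N (Matrix.single q.1.1 q.1.2 1)) q.2.1 q.2.2 *
        (((if q.1.1 = q.1.2 then 1 else 0) * (if q.2.2 = q.2.1 then 1 else 0) +
          (if q.1.1 = q.2.1 then 1 else 0) * (if q.2.2 = q.1.2 then 1 else 0)) / 6) := by
    calc ∫ ψ, f ψ ∂μ
        = ∫ ψ, ∑ q : (Fin 2 × Fin 2) × Fin 2 × Fin 2,
            (N (Matrix.single q.1.1 q.1.2 1)) q.2.1 q.2.2 •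
              mon q.1.1 q.2.2 q.1.2 q.2.1 ψ ∂μ := by simp only [hfsum]
      _ = ∑ q : (Fin 2 × Fin 2) × Fin 2 × Fin 2, ∫ ψ,
            (N (Matrix.single q.1.1 q.1.2 1)) q.2.1 q.2.2 •
              mon q.1.1 q.2.2 q.1.2 q.2.1 ψ ∂μ :=
            integral_finset_sum _ fun q _ => by
              exact (integrable_mon μ hsphere q.1.1 q.2.2 q.1.2 q.2.1).smul
                ((N (Matrix.single q.1.1 q.1.2 1)) q.2.1 q.2.2)
      _ = _ := by
            refine Finset.sum_congr rfl fun q _ => ?_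
            rw [hsmul, mom_eq μ hsphere hinv]
  simp only [Fintype.sum_prod_type, Fin.sum_univ_two] at hF
  norm_num at hF
  -- trace preservation facts
  have hTP00 : (N (Matrix.single 0 0 1)) 0 0 + (N (Matrix.single 0 0 1)) 1 1
      = 1 := by
    have h := hN.2 (Matrix.single 0 0 1)
    simpa [Matrix.trace, Matrix.diag, Fin.sum_univ_two, Matrix.single_apply_same,
      Matrix.single] using h
  have hTP11 : (N (Matrix.single 1 1 1)) 0 0 + (N (Matrix.single 1 1 1)) 1 1
      = 1 := by
    have h := hN.2 (Matrix.single 1 1 1)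
    simpa [Matrix.trace, Matrix.diag, Fin.sum_univ_two, Matrix.single] using h
  have hF6 : (6 : ℂ) * ∫ ψ, f ψ ∂μ = 2 +
      ((N (Matrix.single 0 0 1)) 0 0 + (N (Matrix.single 0 1 1)) 0 1 +
       (N (Matrix.single 1 0 1)) 1 0 + (N (Matrix.single 1 1 1)) 1 1) := by
    linear_combination 6 * hF + hTP00 + hTP11
  have hRe : ∫ ψ, (f ψ).re ∂μ = (∫ ψ, f ψ ∂μ).re := by
    simpa using (integral_re hfint)
  have hre6 : 6 * (∫ ψ, f ψ ∂μ).re = 2 + (ptm N).trace := by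
    have h := congrArg Complex.re hF6
    rw [ptm_trace N]
    simpa [Complex.mul_re, Complex.add_re] using h
  constructor
  · rw [show (∫ ψ, (star ψ ⬝ᵥ (N (Matrix.vecMulVec ψ (star ψ))).mulVec ψ).re ∂μ)
        = ∫ ψ, (f ψ).re ∂μ from rfl, hRe]
    linarith
  · rw [show (∫ ψ, (star ψ ⬝ᵥ (N (Matrix.vecMulVec ψ (star ψ))).mulVec ψ).re ∂μ)
        = ∫ ψ, (f ψ).re ∂μ from rfl, hRe]
    have htr : ((1 : Matrix (Fin 4) (Fin 4) ℝ) - ptm N).trace = 4 - (ptm N).trace := by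
      rw [Matrix.trace_sub, Matrix.trace_one]
      norm_num
    rw [htr]
    linarith
end
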